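/- Let μ be a weight measure over a finite alphabet Σ with values in a linearly ordered cancellative commutative monoid A and let w ∈ Σ*. Then w is μ-prefix normal if and only if p_{w,μ}(j) ≤ p_{w,μ}(i) · p_{w,μ}(j−i) holds for all 0 ≤ i < j ≤ |w|. -/

import Mathlib

/-- The weight of a word: the product of the weights of its letters. -/
def weight {α A : Type*} [CommMonoid A] [LinearOrder A] [IsOrderedCancelMonoid A] (μ : α → A) (w : List α) : A :=
  (w.map μ).prod

/-- The factor-weight function: `factorWeight μ w i` is the maximum weight of a
length-`i` factor (contiguous subword) of `w`. -/
def factorWeight {α A : Type*} [CommMonoid A] [LinearOrder A] [IsOrderedCancelMonoid A] (μ : α → A)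
    (w : List α) (i : ℕ) : A :=
  ((List.range (w.length + 1 - i)).map fun j => weight μ ((w.drop j).take i)).foldr max 1

/-- A word is `μ`-prefix normal if its factor-weight function agrees with its
prefix-weight function. -/
def PrefixNormal {α A : Type*} [CommMonoid A] [LinearOrder A] [IsOrderedCancelMonoid A] (μ : α → A)
    (w : List α) : Prop :=
  ∀ i ≤ w.length, factorWeight μ w i = weight μ (w.take i)

/-- A weight measure is gapfree if for every word `w` and every `1 ≤ i ≤ |w|` there is a
letter `a` with `f_{w,μ}(i) = f_{w,μ}(i-1) * μ a`. -/
def Gapfree {α A : Type*} [CommMonoid A] [LinearOrder A] [IsOrderedCancelMonoid A] (μ : α → A) : Prop :=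
  ∀ w : List α, ∀ i, 1 ≤ i → i ≤ w.length →
    ∃ a : α, factorWeight μ w i = factorWeight μ w (i - 1) * μ a

/-- `pnClass μ w` is the set `P_μ(w)` of words that are factor-weight equivalent to `w`
and `μ`-prefix normal. -/
def pnClass {α A : Type*} [CommMonoid A] [LinearOrder A] [IsOrderedCancelMonoid A] (μ : α → A)
    (w : List α) : Set (List α) :=
  {v | (∀ i, factorWeight μ v i = factorWeight μ w i) ∧ PrefixNormal μ v}

/-!
Splitting the length-`j` prefix at `i` gives `p(j) = p(i) · μ(w[i, j))`, so after cancelling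
`p(i)` submultiplicativity says exactly that every factor weighs at most the prefix of the same
length, which is prefix normality since the prefix is itself a factor. Weights `≥ 1` make the
`1` seeding the maximum in `factorWeight` harmless.
-/

theorem List.foldr_max_le_iff {A : Type*} [LinearOrder A] {l : List A} {b c : A} :
    l.foldr max b ≤ c ↔ b ≤ c ∧ ∀ x ∈ l, x ≤ c := by
  induction l with
  | nil => simp
  | cons y l ih => simp only [List.foldr_cons, max_le_iff, ih, List.forall_mem_cons]; tauto

section Weight

variable {α A : Type*} [CommMonoid A] [LinearOrder A] [IsOrderedCancelMonoid A] (μ : α → A)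

theorem weight_append (u v : List α) : weight μ (u ++ v) = weight μ u * weight μ v := by
  simp [weight]

theorem weight_take_add (w : List α) (i k : ℕ) :
    weight μ (w.take (i + k)) = weight μ (w.take i) * weight μ ((w.drop i).take k) := by
  rw [List.take_add, weight_append]

theorem one_le_weight {μ : α → A} (hμ : ∀ a, 1 ≤ μ a) (u : List α) : 1 ≤ weight μ u :=
  List.one_le_prod_of_one_le fun _ hx => by
    obtain ⟨a, -, rfl⟩ := List.mem_map.mp hx
    exact hμ a

theorem le_factorWeight {w : List α} {j i : ℕ} (h : j + i ≤ w.length) :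
    weight μ ((w.drop j).take i) ≤ factorWeight μ w i :=
  List.le_max_of_le' 1 (List.mem_map.mpr ⟨j, List.mem_range.mpr (by omega), rfl⟩) le_rfl

theorem factorWeight_le {w : List α} {i : ℕ} {b : A} (hb : 1 ≤ b)
    (h : ∀ j, j + i ≤ w.length → weight μ ((w.drop j).take i) ≤ b) : factorWeight μ w i ≤ b := by
  refine List.foldr_max_le_iff.mpr ⟨hb, ?_⟩
  simp only [List.mem_map, List.mem_range, forall_exists_index, and_imp]
  rintro _ j hj rfl
  exact h j (by omega)

theorem prefixNormal_iff_factor_le_prefix {μ : α → A} (hμ : ∀ a, 1 ≤ μ a) (w : List α) :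
    PrefixNormal μ w ↔
      ∀ j i, j + i ≤ w.length → weight μ ((w.drop j).take i) ≤ weight μ (w.take i) := by
  refine ⟨fun h j i hji => h i (by omega) ▸ le_factorWeight μ hji, fun h i hi => ?_⟩
  refine le_antisymm (factorWeight_le μ (one_le_weight hμ _) (h · i)) ?_
  simpa using le_factorWeight μ (j := 0) (by simpa using hi)

end Weight

theorem prefixNormal_iff_prefixWeight_submultiplicative_general {α A : Type*}
    [CommMonoid A] [LinearOrder A] [IsOrderedCancelMonoid A] (μ : α → A) (hμ : ∀ a : α, 1 < μ a)
    (w : List α) :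
    PrefixNormal μ w ↔
      ∀ i j : ℕ, i < j → j ≤ w.length →
        weight μ (w.take j) ≤ weight μ (w.take i) * weight μ (w.take (j - i)) := by
  rw [prefixNormal_iff_factor_le_prefix (fun a => (hμ a).le)]
  constructor
  · intro h i j hij hj
    obtain ⟨k, rfl⟩ := Nat.exists_eq_add_of_le hij.le
    rw [Nat.add_sub_cancel_left, weight_take_add]
    exact mul_le_mul_right (h i k hj) _
  · intro h i k hik
    rcases Nat.eq_zero_or_pos k with rfl | hk
    · simp
    have hsub := h i (i + k) (by omega) hik
    rw [weight_take_add, Nat.add_sub_cancel_left] at hsub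
    exact le_of_mul_le_mul_left' hsub

/-- A word is `μ`-prefix normal iff its prefix-weight function is submultiplicative:
`p_{w,μ}(j) ≤ p_{w,μ}(i) * p_{w,μ}(j-i)` for all `0 ≤ i < j ≤ |w|`. -/
theorem prefixNormal_iff_prefixWeight_submultiplicative {α A : Type*} [Fintype α]
    [CommMonoid A] [LinearOrder A] [IsOrderedCancelMonoid A] (μ : α → A) (hμ : ∀ a : α, 1 < μ a)
    (w : List α) :
    PrefixNormal μ w ↔
      ∀ i j : ℕ, i < j → j ≤ w.length →
        weight μ (w.take j) ≤ weight μ (w.take i) * weight μ (w.take (j - i)) :=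
  prefixNormal_iff_prefixWeight_submultiplicative_general μ hμ w
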